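/- Let M = ⊕_{s≥0} M(s) be an admissible V-module and m, n, p ∈ Z_+. For homogeneous u, v ∈ V define o_t(u) = u_{wt u - 1 - t}. Then o_{n-p}(u) o_{p-m}(v) = o_{n-m}(u *_{m,p}^n v) as maps M(m) → M(n), where u *_{m,p}^n v = Σ_{i=0}^p (-1)^i C(m+n-p+i, i) Res_z (1+z)^{wt u + m}/z^{m+n-p+i+1} Y(u,z)v. -/

import Mathlib

/-- Generalized binomial coefficient `C(n, k)` for `n : ℤ`, valued in `ℂ`. -/
noncomputable def cbinom (n : ℤ) (k : ℕ) : ℂ :=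
  (∏ i ∈ Finset.range k, ((n : ℂ) - (i : ℂ))) / (Nat.factorial k : ℂ)

lemma cbinom_zero (n : ℤ) : cbinom n 0 = 1 := by simp [cbinom]

lemma cbinom_int_lt {a : ℤ} {k : ℕ} (h0 : 0 ≤ a) (h : a < k) : cbinom a k = 0 := by
  have hmem : a.toNat ∈ Finset.range k := by simp [Finset.mem_range]; omega
  have : (∏ i ∈ Finset.range k, ((a : ℂ) - (i : ℂ))) = 0 :=
    Finset.prod_eq_zero hmem (by
      have h1 : ((a.toNat : ℤ) : ℂ) = (a : ℂ) := by rw [Int.toNat_of_nonneg h0]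
      push_cast at h1 ⊢
      rw [← h1]; ring)
  simp [cbinom, this]

lemma cbinom_pascal (n : ℤ) (k : ℕ) :
    cbinom n (k + 1) = cbinom (n - 1) k + cbinom (n - 1) (k + 1) := by
  have hk : ((Nat.factorial k : ℂ)) ≠ 0 :=
    Nat.cast_ne_zero.mpr (Nat.factorial_pos k).ne'
  have hfact : (Nat.factorial (k+1) : ℂ) = ((k:ℂ) + 1) * (Nat.factorial k : ℂ) := by
    rw [Nat.factorial_succ]; push_cast; ring
  have hk1' : ((k:ℂ) + 1) ≠ 0 := Nat.cast_add_one_ne_zero k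
  simp only [cbinom, Int.cast_sub, Int.cast_one, hfact]
  have hnum1 : (∏ i ∈ Finset.range (k+1), ((n : ℂ) - (i : ℂ)))
      = (∏ i ∈ Finset.range k, ((n : ℂ) - 1 - (i : ℂ))) * (n : ℂ) := by
    rw [Finset.prod_range_succ']
    congr 1
    · exact Finset.prod_congr rfl (by intro i _; push_cast; ring)
    · norm_num
  have hnum2 : (∏ i ∈ Finset.range (k+1), ((n : ℂ) - 1 - (i : ℂ)))
      = (∏ i ∈ Finset.range k, ((n : ℂ) - 1 - (i : ℂ))) * ((n : ℂ) - 1 - k) := by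
    rw [Finset.prod_range_succ]
  rw [hnum1, hnum2]
  field_simp
  ring

lemma cbinom_neg (n : ℤ) (k : ℕ) :
    cbinom (-(n + 1)) k = (-1 : ℂ) ^ k * cbinom (n + k) k := by
  have key : ∀ (x : ℂ) (k : ℕ), (∏ i ∈ Finset.range k, (x + k - i)) =
      ∏ i ∈ Finset.range k, (x + 1 + i) := by
    intro x k
    induction k generalizing x with
    | zero => simp
    | succ k ih =>
      rw [Finset.prod_range_succ, Finset.prod_range_succ']
      have h1 : (∏ i ∈ Finset.range k, (x + (k+1:ℕ) - i)) =
          ∏ i ∈ Finset.range k, ((x+1) + k - i) := by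
        exact Finset.prod_congr rfl (by intro i _; push_cast; ring)
      rw [h1, ih (x+1)]
      push_cast
      congr 1
      · exact Finset.prod_congr rfl (by intro i _; push_cast; ring)
      · ring
  have hnum : (∏ i ∈ Finset.range k, (((-(n+1) : ℤ) : ℂ) - (i : ℂ))) =
      (-1:ℂ)^k * ∏ i ∈ Finset.range k, (((n + k : ℤ) : ℂ) - (i : ℂ)) := by
    have h2 : (∏ i ∈ Finset.range k, (((n + k : ℤ) : ℂ) - (i : ℂ))) =
        ∏ i ∈ Finset.range k, ((n:ℂ) + 1 + i) := by
      have := key (n : ℂ) k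
      rw [← this]
      exact Finset.prod_congr rfl (by intro i _; push_cast; ring)
    rw [h2, show ((-1:ℂ)^k) = ∏ _i ∈ Finset.range k, (-1:ℂ) by simp, ← Finset.prod_mul_distrib]
    exact Finset.prod_congr rfl (by intro i _; push_cast; ring)
  unfold cbinom
  rw [hnum, mul_div_assoc]

lemma cbinom_vandermonde (j : ℕ) : ∀ y z : ℤ,
    (∑ i ∈ Finset.range (j+1), cbinom y i * cbinom z (j - i)) = cbinom (y + z) j := by
  induction j with
  | zero => intro y z; simp [cbinom_zero]
  | succ j ihj =>
    intro y z
    induction z using Int.induction_on with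
    | zero =>
      rw [Finset.sum_eq_single (j+1)]
      · simp [cbinom_zero]
      · intro i hi hne
        have hi' : i < j + 1 + 1 := Finset.mem_range.mp hi
        have h0 : cbinom 0 (j + 1 - i) = 0 := cbinom_int_lt le_rfl (by omega)
        rw [h0, mul_zero]
      · intro h; exact absurd (Finset.self_mem_range_succ (j+1)) h
    | succ z ihz =>
      have expand : (∑ i ∈ Finset.range (j+1+1), cbinom y i * cbinom ((z:ℤ)+1) (j+1-i))
          = (∑ i ∈ Finset.range (j+1), cbinom y i * (cbinom z (j-i) + cbinom z (j+1-i)))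
            + cbinom y (j+1) := by
        rw [Finset.sum_range_succ]
        simp only [Nat.sub_self, cbinom_zero, mul_one]
        congr 1
        refine Finset.sum_congr rfl ?_
        intro i hi
        have hi' : i < j + 1 := Finset.mem_range.mp hi
        have : j + 1 - i = (j - i) + 1 := by omega
        rw [this, cbinom_pascal]
        norm_num
      rw [expand]
      have split : (∑ i ∈ Finset.range (j+1), cbinom y i * (cbinom z (j-i) + cbinom z (j+1-i)))
          = (∑ i ∈ Finset.range (j+1), cbinom y i * cbinom z (j-i))
            + (∑ i ∈ Finset.range (j+1), cbinom y i * cbinom z (j+1-i)) := by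
        rw [← Finset.sum_add_distrib]; refine Finset.sum_congr rfl ?_; intro i _; ring
      rw [split, ihj y z]
      have hrest : (∑ i ∈ Finset.range (j+1), cbinom y i * cbinom z (j+1-i)) + cbinom y (j+1)
          = cbinom (y+z) (j+1) := by
        have := ihz
        rw [Finset.sum_range_succ] at this
        simp only [Nat.sub_self, cbinom_zero, mul_one] at this
        linear_combination this
      rw [add_assoc, hrest]
      have := cbinom_pascal (y + z + 1) (j)
      have h2 : y + z + 1 - 1 = y + z := by ring
      rw [h2] at this
      rw [show y + ((z:ℤ)+1) = y + z + 1 by ring, this]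
    | pred z ihz =>
      have expand : (∑ i ∈ Finset.range (j+1+1), cbinom y i * cbinom (-(z:ℤ)-1) (j+1-i))
          = (∑ i ∈ Finset.range (j+1), cbinom y i * (cbinom (-(z:ℤ)) (j+1-i) - cbinom (-(z:ℤ)-1) (j-i)))
            + cbinom y (j+1) := by
        rw [Finset.sum_range_succ]
        simp only [Nat.sub_self, cbinom_zero, mul_one]
        congr 1
        refine Finset.sum_congr rfl ?_
        intro i hi
        have hi' : i < j + 1 := Finset.mem_range.mp hi
        have hs : j + 1 - i = (j - i) + 1 := by omega
        have := cbinom_pascal (-(z:ℤ)) (j - i)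
        rw [hs, this]
        ring
      rw [expand]
      have split : (∑ i ∈ Finset.range (j+1), cbinom y i * (cbinom (-(z:ℤ)) (j+1-i) - cbinom (-(z:ℤ)-1) (j-i)))
          = (∑ i ∈ Finset.range (j+1), cbinom y i * cbinom (-(z:ℤ)) (j+1-i))
            - (∑ i ∈ Finset.range (j+1), cbinom y i * cbinom (-(z:ℤ)-1) (j-i)) := by
        rw [← Finset.sum_sub_distrib]; refine Finset.sum_congr rfl ?_; intro i _; ring
      rw [split, ihj y (-(z:ℤ)-1)]
      have hrest : (∑ i ∈ Finset.range (j+1), cbinom y i * cbinom (-(z:ℤ)) (j+1-i)) + cbinom y (j+1)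
          = cbinom (y + -(z:ℤ)) (j+1) := by
        have := ihz
        rw [Finset.sum_range_succ] at this
        simp only [Nat.sub_self, cbinom_zero, mul_one] at this
        linear_combination this
      have pas := cbinom_pascal (y + -(z:ℤ)) j
      rw [show y + (-(z:ℤ)-1) = y + -(z:ℤ) - 1 by ring] at *
      linear_combination hrest + pas

lemma cbinom_neg' (a : ℤ) (i : ℕ) :
    (-1 : ℂ)^i * cbinom (-(a + 1)) i = cbinom (a + i) i := by
  rw [cbinom_neg, ← mul_assoc, ← mul_pow]
  norm_num

lemma coeff_delta (a : ℤ) (j : ℕ) :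
    (∑ i ∈ Finset.range (j+1), ((-1:ℂ)^i * cbinom (a + i) i) * cbinom (a + j) (j - i))
      = if j = 0 then 1 else 0 := by
  have h1 : ∀ i : ℕ, (-1:ℂ)^i * cbinom (a + i) i = cbinom (-(a+1)) i := by
    intro i
    rw [cbinom_neg]
  have h2 : (∑ i ∈ Finset.range (j+1), ((-1:ℂ)^i * cbinom (a + i) i) * cbinom (a + j) (j - i))
      = ∑ i ∈ Finset.range (j+1), cbinom (-(a+1)) i * cbinom (a + j) (j - i) := by
    refine Finset.sum_congr rfl ?_; intro i _; rw [h1]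
  rw [h2, cbinom_vandermonde j (-(a+1)) (a + j)]
  have h3 : -(a+1) + (a + j) = ((j:ℤ) - 1) := by ring
  rw [h3]
  cases j with
  | zero => norm_num [cbinom]
  | succ j => rw [if_neg (Nat.succ_ne_zero j), cbinom_int_lt (by omega) (by omega)]

section Comb
variable {M : Type*} [AddCommGroup M] [Module ℂ M]

lemma comb_sum (a : ℤ) (p : ℕ) (T : ℕ → M) (hT : ∀ j, p < j → T j = 0) :
    (∑ i' ∈ Finset.range (p+1), ((-1:ℂ)^i' * cbinom (a + i') i') •
      (∑ i ∈ Finset.range (p+1), (((-1:ℂ)^i * cbinom (-(a + i' + 1)) i) • T (i' + i))))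
      = T 0 := by
  have step1 : ∀ i' ∈ Finset.range (p+1),
      ((-1:ℂ)^i' * cbinom (a + i') i') •
        (∑ i ∈ Finset.range (p+1), (((-1:ℂ)^i * cbinom (-(a + i' + 1)) i) • T (i' + i)))
      = ∑ j ∈ Finset.range (p+1), (if i' ≤ j then
          (((-1:ℂ)^i' * cbinom (a + i') i') * cbinom (a + j) (j - i')) • T j else 0) := by
    intro i' hi'
    have hi'p : i' ≤ p := by simpa [Nat.lt_succ] using Finset.mem_range.mp hi'
    rw [Finset.smul_sum]
    have lhs_eq : (∑ i ∈ Finset.range (p+1),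
        ((-1:ℂ)^i' * cbinom (a + i') i') • (((-1:ℂ)^i * cbinom (-(a + i' + 1)) i) • T (i' + i)))
        = ∑ i ∈ Finset.range (p+1-i'),
          (((-1:ℂ)^i' * cbinom (a + i') i') * cbinom (a + (i' + i)) ((i' + i) - i')) • T (i' + i) := by
      rw [← Finset.sum_subset (Finset.range_subset_range.mpr (by omega : p+1-i' ≤ p+1))]
      · refine Finset.sum_congr rfl ?_
        intro i _
        rw [smul_smul]
        congr 1
        have : ((-1:ℂ)^i * cbinom (-(a + i' + 1)) i) = cbinom (a + i' + i) i := by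
          rw [show (-(a + i' + 1)) = -((a + i') + 1) by ring, cbinom_neg' (a + i') i]
        rw [this]
        congr 2
        · push_cast; ring
        · omega
      · intro i hi hni
        have : p < i' + i := by
          simp only [Finset.mem_range] at hi hni; omega
        rw [hT _ this, smul_zero, smul_zero]
    rw [lhs_eq]
    have : ∑ i ∈ Finset.range (p+1-i'),
          (((-1:ℂ)^i' * cbinom (a + i') i') * cbinom (a + (i' + i)) ((i' + i) - i')) • T (i' + i)
        = ∑ j ∈ Finset.Ico i' (p+1),
          (((-1:ℂ)^i' * cbinom (a + i') i') * cbinom (a + j) (j - i')) • T j := by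
      rw [Finset.sum_Ico_eq_sum_range]
      refine Finset.sum_congr rfl ?_
      intro i _
      have e2 : a + ((i':ℤ) + (i:ℤ)) = a + (((i'+i : ℕ) : ℤ)) := by push_cast; ring
      rw [e2]
    rw [this, show Finset.Ico i' (p+1) = Finset.filter (fun j => i' ≤ j) (Finset.range (p+1))
        from by ext j; simp only [Finset.mem_Ico, Finset.mem_filter, Finset.mem_range]; omega,
      Finset.sum_filter]
  rw [Finset.sum_congr rfl step1, Finset.sum_comm]
  have step2 : ∀ j ∈ Finset.range (p+1),
      (∑ i' ∈ Finset.range (p+1), if i' ≤ j then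
          (((-1:ℂ)^i' * cbinom (a + i') i') * cbinom (a + j) (j - i')) • T j else 0)
      = (if j = 0 then (1:ℂ) else 0) • T j := by
    intro j hj
    rw [← Finset.sum_filter]
    rw [show Finset.filter (fun i' => i' ≤ j) (Finset.range (p+1)) = Finset.range (j+1)
        from by ext i; simp only [Finset.mem_filter, Finset.mem_range] at *; omega]
    rw [← Finset.sum_smul, coeff_delta a j]
  rw [Finset.sum_congr rfl step2, Finset.sum_eq_single 0]
  · simp
  · intro j _ hne
    rw [if_neg hne, zero_smul]
  · intro h
    exact absurd (Finset.mem_range.mpr (by omega)) h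
end Comb


/-- A vertex operator algebra structure on a complex vector space `V`. -/
structure VOA (V : Type) [AddCommGroup V] [Module ℂ V] where
  mode : V → ℤ → Module.End ℂ V
  vacuum : V
  conformal : V
  grading : ℤ → Submodule ℂ V
  internal : Function.Bijective (DirectSum.coeLinearMap grading)
  mode_add : ∀ (u v : V) (n : ℤ), mode (u + v) n = mode u n + mode v n
  mode_smul : ∀ (c : ℂ) (u : V) (n : ℤ), mode (c • u) n = c • mode u n
  truncation : ∀ u v : V, ∃ N : ℤ, ∀ n : ℤ, N ≤ n → mode u n v = 0
  vacuum_mem : vacuum ∈ grading 0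
  conformal_mem : conformal ∈ grading 2
  vacuum_mode : ∀ (v : V) (n : ℤ), mode vacuum n v = if n = -1 then v else 0
  creation : ∀ (u : V) (n : ℤ), 0 ≤ n → mode u n vacuum = 0
  creation_neg_one : ∀ u : V, mode u (-1) vacuum = u
  L0_eigen : ∀ (n : ℤ) (u : V), u ∈ grading n → mode conformal 1 u = (n : ℂ) • u
  Lneg1_deriv : ∀ (u : V) (n : ℤ), mode (mode conformal 0 u) n = (-n : ℂ) • mode u (n - 1)
  grading_mode : ∀ (r s m : ℤ) (u v : V), u ∈ grading r → v ∈ grading s →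
    mode u m v ∈ grading (r + s - m - 1)
  bounded_below : ∃ N : ℤ, ∀ n : ℤ, n < N → grading n = ⊥
  fin_dim : ∀ n : ℤ, FiniteDimensional ℂ (grading n)
  borcherds : ∀ (p q r : ℤ) (u v w : V),
    (∑ᶠ i : ℕ, cbinom p i • mode (mode u (r + i) v) (p + q - i) w) =
    ∑ᶠ i : ℕ, ((-1 : ℂ) ^ i * cbinom r i) •
      (mode u (p + r - i) (mode v (q + i) w)
        - (-1 : ℂ) ^ r • mode v (q + r - i) (mode u (p + i) w))

variable {V : Type} [AddCommGroup V] [Module ℂ V]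

/-- Projection onto the weight-`n` subspace. -/
noncomputable def VOA.proj (d : VOA V) (n : ℤ) : V →ₗ[ℂ] V :=
  (d.grading n).subtype ∘ₗ (DirectSum.component ℂ ℤ (fun m => d.grading m) n) ∘ₗ
    (LinearEquiv.ofBijective (DirectSum.coeLinearMap d.grading) d.internal).symm.toLinearMap

/-- `Res_z (1+z)^N z^{-k} Y(u,z)v` for a vector `u` regarded as having weight contribution `N`. -/
noncomputable def VOA.hres (d : VOA V) (N k : ℤ) (u v : V) : V :=
  ∑ᶠ i : ℕ, cbinom N i • d.mode u ((i : ℤ) - k) v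

/-- `Res_z (1+z)^{wt u + m} z^{-k} Y(u,z)v`, extended bilinearly from homogeneous `u`. -/
noncomputable def VOA.bres (d : VOA V) (m k : ℤ) (u v : V) : V :=
  ∑ᶠ n : ℤ, d.hres (n + m) k (d.proj n u) v

/-- The Zhu product `u * v`. -/
noncomputable def VOA.star (d : VOA V) (u v : V) : V := d.bres 0 1 u v

/-- The Zhu circle product `u ∘ v`. -/
noncomputable def VOA.circ (d : VOA V) (u v : V) : V := d.bres 0 2 u v

/-- The subspace `O(V)` spanned by all `u ∘ v`. -/
def VOA.Ozhu (d : VOA V) : Submodule ℂ V := Submodule.span ℂ {w : V | ∃ u v : V, w = d.circ u v}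

/-- The product `u ∘_n v`. -/
noncomputable def VOA.circn (d : VOA V) (n : ℕ) (u v : V) : V := d.bres n (2 * n + 2) u v

/-- The product `u *_n v` of Dong–Li–Mason. -/
noncomputable def VOA.starn (d : VOA V) (n : ℕ) (u v : V) : V :=
  ∑ m ∈ Finset.range (n + 1),
    ((-1 : ℂ) ^ m * cbinom ((m : ℤ) + (n : ℤ)) n) • d.bres n ((n : ℤ) + (m : ℤ) + 1) u v

/-- The subspace `O_n(V)`. -/
def VOA.On (d : VOA V) (n : ℕ) : Submodule ℂ V :=
  Submodule.span ℂ ({w : V | ∃ u v : V, w = d.circn n u v} ∪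
    {w : V | ∃ u : V, w = d.mode d.conformal 0 u + d.mode d.conformal 1 u})

/-- The Dong–Jiang product `u *_{m,p}^n v`. -/
noncomputable def VOA.starmpn (d : VOA V) (m p n : ℕ) (u v : V) : V :=
  ∑ i ∈ Finset.range (p + 1),
    ((-1 : ℂ) ^ i * cbinom ((m : ℤ) + (n : ℤ) - (p : ℤ) + (i : ℤ)) i) •
      d.bres m ((m : ℤ) + (n : ℤ) - (p : ℤ) + (i : ℤ) + 1) u v

/-- The Dong–Jiang product `u ∘_m^n v`. -/
noncomputable def VOA.circmn (d : VOA V) (n m : ℕ) (u v : V) : V :=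
  d.bres m ((n : ℤ) + (m : ℤ) + 2) u v

/-- The subspace `O_{n,m}(V) = O'_{n,m}(V) + O''_{n,m}(V) + O'''_{n,m}(V)` of Dong–Jiang. -/
def VOA.Onm (d : VOA V) (n m : ℕ) : Submodule ℂ V :=
  Submodule.span ℂ (
    {w : V | ∃ u v : V, w = d.circmn n m u v} ∪
    {w : V | ∃ u : V, w = d.mode d.conformal 0 u + d.mode d.conformal 1 u
        + (((m : ℂ) - (n : ℂ)) • u)} ∪
    {w : V | ∃ (u a b c : V) (p₁ p₂ p₃ : ℕ), w = d.starmpn m p₃ n u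
        (d.starmpn m p₁ p₃ (d.starmpn p₁ p₂ p₃ a b) c
          - d.starmpn m p₂ p₃ a (d.starmpn m p₁ p₂ b c))} ∪
    {w : V | ∃ (p : ℕ) (u x v : V), x ∈ d.On p ∧ w = d.starmpn m p n (d.starmpn p p n u x) v})

/-- The subspace `C_2(V)` spanned by the `u_{-2} v`. -/
def VOA.C2 (d : VOA V) : Submodule ℂ V := Submodule.span ℂ {w : V | ∃ u v : V, w = d.mode u (-2) v}

/-- `V` is a simple vertex operator algebra: its only ideals are `0` and `V`. -/
def VOA.IsSimpleVOA (d : VOA V) : Prop :=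
  (∃ v : V, v ≠ 0) ∧ ∀ P : Submodule ℂ V,
    (∀ (u : V) (n : ℤ), ∀ w ∈ P, d.mode u n w ∈ P) → P = ⊥ ∨ P = ⊤

/-- A weak module for the vertex operator algebra `d`. -/
structure WeakMod (d : VOA V) (M : Type) [AddCommGroup M] [Module ℂ M] where
  act : V → ℤ → Module.End ℂ M
  act_add : ∀ (u v : V) (n : ℤ), act (u + v) n = act u n + act v n
  act_smul : ∀ (c : ℂ) (u : V) (n : ℤ), act (c • u) n = c • act u n
  truncation : ∀ (u : V) (w : M), ∃ N : ℤ, ∀ n : ℤ, N ≤ n → act u n w = 0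
  vacuum_act : ∀ (w : M) (n : ℤ), act d.vacuum n w = if n = -1 then w else 0
  borcherds : ∀ (p q r : ℤ) (u v : V) (w : M),
    (∑ᶠ i : ℕ, cbinom p i • act (d.mode u (r + i) v) (p + q - i) w) =
    ∑ᶠ i : ℕ, ((-1 : ℂ) ^ i * cbinom r i) •
      (act u (p + r - i) (act v (q + i) w)
        - (-1 : ℂ) ^ r • act v (q + r - i) (act u (p + i) w))

/-- An admissible (ℤ₊-graded) module for the vertex operator algebra `d`. -/
structure AdmMod (d : VOA V) (M : Type) [AddCommGroup M] [Module ℂ M]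
    extends WeakMod d M where
  gr : ℤ → Submodule ℂ M
  gr_internal : Function.Bijective (DirectSum.coeLinearMap gr)
  gr_neg : ∀ n : ℤ, n < 0 → gr n = ⊥
  gr_act : ∀ (r : ℤ) (u : V), u ∈ d.grading r → ∀ (m n : ℤ) (w : M), w ∈ gr n →
    act u m w ∈ gr (r + n - m - 1)

variable {M : Type} [AddCommGroup M] [Module ℂ M]

/-- The zero-mode `o(v) = v_{wt v - 1}`, extended linearly from homogeneous `v`. -/
noncomputable def WeakMod.o {d : VOA V} (W : WeakMod d M) (v : V) (w : M) : M :=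
  ∑ᶠ r : ℤ, W.act (d.proj r v) (r - 1) w

/-- The mode `o_t(v) = v_{wt v - 1 - t}`, extended linearly from homogeneous `v`. -/
noncomputable def WeakMod.ot {d : VOA V} (W : WeakMod d M) (t : ℤ) (v : V) (w : M) : M :=
  ∑ᶠ r : ℤ, W.act (d.proj r v) (r - 1 - t) w

/-- The subspace `Ω_n(M)` of a weak module. -/
def WeakMod.OmegaSet {d : VOA V} (W : WeakMod d M) (n : ℕ) : Set M :=
  {w : M | ∀ (r : ℤ) (u : V), u ∈ d.grading r → ∀ m : ℤ, m > r - 1 + (n : ℤ) → W.act u m w = 0}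

/-- A subspace stable under all modes. -/
def WeakMod.IsStable {d : VOA V} (W : WeakMod d M) (P : Submodule ℂ M) : Prop :=
  ∀ (u : V) (n : ℤ), ∀ w ∈ P, W.act u n w ∈ P

/-- A subspace compatible with the grading of an admissible module. -/
def AdmMod.IsGraded {d : VOA V} (A : AdmMod d M) (P : Submodule ℂ M) : Prop :=
  P = ⨆ n : ℤ, (P ⊓ A.gr n)

/-- `P` is an irreducible admissible submodule. -/
def AdmMod.IrredSub {d : VOA V} (A : AdmMod d M) (P : Submodule ℂ M) : Prop :=
  P ≠ ⊥ ∧ A.toWeakMod.IsStable P ∧ A.IsGraded P ∧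
    ∀ Q : Submodule ℂ M, Q ≤ P → A.toWeakMod.IsStable Q → A.IsGraded Q → Q = ⊥ ∨ Q = P

/-- The admissible module is irreducible. -/
def AdmMod.IsIrreducible {d : VOA V} (A : AdmMod d M) : Prop :=
  (∃ w : M, w ≠ 0) ∧
    ∀ P : Submodule ℂ M, A.toWeakMod.IsStable P → A.IsGraded P → P = ⊥ ∨ P = ⊤

/-- Rationality: every admissible module is a direct sum of irreducible admissible submodules. -/
def Rational (d : VOA V) : Prop :=
  ∀ (M : Type) [AddCommGroup M] [Module ℂ M] (A : AdmMod d M),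
    ∃ (ι : Type) (f : ι → Submodule ℂ M),
      (∀ i, A.IrredSub (f i)) ∧ iSupIndep f ∧ (⨆ i, f i) = ⊤

/-- Equivalence of admissible modules. -/
def AdmEquiv {d : VOA V} {M₁ M₂ : Type} [AddCommGroup M₁] [Module ℂ M₁]
    [AddCommGroup M₂] [Module ℂ M₂] (A₁ : AdmMod d M₁) (A₂ : AdmMod d M₂) : Prop :=
  ∃ e : M₁ ≃ₗ[ℂ] M₂, ∀ (u : V) (n : ℤ) (w : M₁), e (A₁.act u n w) = A₂.act u n (e w)

/-- An ordinary-module structure on a weak module: a `ℂ`-grading by finite dimensional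
`L(0)`-eigenspaces, bounded below in each coset of `ℤ`. -/
structure OrdinaryStruct {d : VOA V} (W : WeakMod d M) where
  grc : ℂ → Submodule ℂ M
  internal : Function.Bijective (DirectSum.coeLinearMap grc)
  eigen : ∀ (lam : ℂ) (w : M), w ∈ grc lam → W.act d.conformal 1 w = lam • w
  findim : ∀ lam : ℂ, FiniteDimensional ℂ (grc lam)
  bounded : ∀ lam : ℂ, ∃ N : ℤ, ∀ n : ℤ, n < N → grc (lam + (n : ℂ)) = ⊥

/-- An admissible module is ordinary. -/
def AdmMod.IsOrdinary {d : VOA V} (A : AdmMod d M) : Prop :=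
  Nonempty (OrdinaryStruct A.toWeakMod)

/-- A realization of the quotient associative algebra `V/Osub` with product induced by `mu`. -/
structure Realization (Osub : Submodule ℂ V) (mu : V → V → V) (one : V) where
  carrier : Type
  [ring : Ring carrier]
  [alg : Algebra ℂ carrier]
  emb : V →ₗ[ℂ] carrier
  surj : Function.Surjective emb
  ker_eq : LinearMap.ker emb = Osub
  mul_compat : ∀ u v : V, emb (mu u v) = emb u * emb v
  one_compat : emb one = 1

/-- The realized algebra is semisimple. -/
def Realization.Semisimple {Osub : Submodule ℂ V} {mu : V → V → V} {one : V}
    (R : Realization Osub mu one) : Prop :=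
  letI := R.ring; IsSemisimpleRing R.carrier

/-- The realized algebra is finite dimensional over `ℂ`. -/
def Realization.FinDim {Osub : Submodule ℂ V} {mu : V → V → V} {one : V}
    (R : Realization Osub mu one) : Prop :=
  letI := R.ring; letI := R.alg; FiniteDimensional ℂ R.carrier

/-- A module over the quotient algebra `V/Osub`, given as a representation of `V`
killing `Osub` and multiplicative for `mu`. -/
structure RepOf (Osub : Submodule ℂ V) (mu : V → V → V) (one : V)
    (U : Type) [AddCommGroup U] [Module ℂ U] where
  rep : V →ₗ[ℂ] Module.End ℂ U
  kills : ∀ v ∈ Osub, rep v = 0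
  mul_compat : ∀ u v : V, rep (mu u v) = rep u * rep v
  one_compat : rep one = 1

/-- Simplicity of such a representation. -/
def RepOf.IsSimple {Osub : Submodule ℂ V} {mu : V → V → V} {one : V}
    {U : Type} [AddCommGroup U] [Module ℂ U] (Z : RepOf Osub mu one U) : Prop :=
  (∃ u : U, u ≠ 0) ∧
    ∀ P : Submodule ℂ U, (∀ v : V, ∀ x ∈ P, Z.rep v x ∈ P) → P = ⊥ ∨ P = ⊤

/-- Equivalence of two such representations. -/
def RepEquiv {Osub : Submodule ℂ V} {mu : V → V → V} {one : V}
    {U₁ U₂ : Type} [AddCommGroup U₁] [Module ℂ U₁] [AddCommGroup U₂] [Module ℂ U₂]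
    (Z₁ : RepOf Osub mu one U₁) (Z₂ : RepOf Osub mu one U₂) : Prop :=
  ∃ e : U₁ ≃ₗ[ℂ] U₂, ∀ (v : V) (x : U₁), e (Z₁.rep v x) = Z₂.rep v (e x)

section Helpers

variable {V : Type} [AddCommGroup V] [Module ℂ V] {M : Type} [AddCommGroup M] [Module ℂ M]

lemma VOA.proj_mem (d : VOA V) (r : ℤ) (x : V) : d.proj r x ∈ d.grading r :=
  SetLike.coe_mem _

lemma VOA.isInternal (d : VOA V) : DirectSum.IsInternal d.grading := d.internal

lemma VOA.proj_apply_of_mem (d : VOA V) {r : ℤ} {x : V} (hx : x ∈ d.grading r) (s : ℤ) :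
    d.proj s x = if s = r then x else 0 := by
  by_cases h : s = r
  · subst h
    have h2 := d.isInternal.ofBijective_coeLinearMap_of_mem hx
    simp only [VOA.proj, LinearMap.coe_comp, Function.comp_apply, Submodule.coe_subtype]
    erw [h2]
    simp
  · have h2 := d.isInternal.ofBijective_coeLinearMap_of_mem_ne (Ne.symm h) hx
    simp only [VOA.proj, LinearMap.coe_comp, Function.comp_apply, Submodule.coe_subtype]
    erw [h2]
    simp [h]

lemma VOA.proj_support_finite (d : VOA V) (x : V) :
    (Function.support fun r => d.proj r x).Finite := by
  classical
  set e := LinearEquiv.ofBijective (DirectSum.coeLinearMap d.grading) d.internal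
  apply Set.Finite.subset (DFinsupp.support (e.symm x)).finite_toSet
  intro r hr
  simp only [Function.mem_support] at hr
  simp only [Finset.coe_sort_coe, Finset.mem_coe, DFinsupp.mem_support_iff]
  intro h0
  apply hr
  show ((DirectSum.component ℂ ℤ (fun m => d.grading m) r) (e.symm x) : V) = 0
  have : (DirectSum.component ℂ ℤ (fun m => d.grading m) r) (e.symm x) = e.symm x r := rfl
  rw [this, h0]
  rfl

lemma finsum_coe_eq_coeLinearMap (d : VOA V) (y : DirectSum ℤ (fun i => ↥(d.grading i))) :
    (∑ᶠ r, (y r : V)) = DirectSum.coeLinearMap d.grading y := by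
  classical
  induction y using DirectSum.induction_on with
  | zero => simp
  | of i z =>
    rw [DirectSum.coeLinearMap_of]
    rw [finsum_eq_single _ i]
    · rw [DirectSum.of_eq_same]
    · intro r hr
      rw [DirectSum.of_eq_of_ne _ _ _ hr]
      rfl
  | add y₁ y₂ ih₁ ih₂ =>
    rw [map_add, ← ih₁, ← ih₂, ← finsum_add_distrib]
    · exact finsum_congr fun r => rfl
    · apply Set.Finite.subset (DFinsupp.support y₁).finite_toSet
      intro r hr
      simp only [Function.mem_support] at hr
      simp only [Finset.coe_sort_coe, Finset.mem_coe, DFinsupp.mem_support_iff]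
      intro h0; exact hr (by rw [h0]; rfl)
    · apply Set.Finite.subset (DFinsupp.support y₂).finite_toSet
      intro r hr
      simp only [Function.mem_support] at hr
      simp only [Finset.coe_sort_coe, Finset.mem_coe, DFinsupp.mem_support_iff]
      intro h0; exact hr (by rw [h0]; rfl)

lemma VOA.finsum_proj (d : VOA V) (x : V) : ∑ᶠ r, d.proj r x = x := by
  set e := LinearEquiv.ofBijective (DirectSum.coeLinearMap d.grading) d.internal with he
  have h1 : ∀ r, d.proj r x = ((e.symm x) r : V) := fun r => rfl
  rw [finsum_congr h1, finsum_coe_eq_coeLinearMap d (e.symm x)]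
  exact e.apply_symm_apply x

lemma lmap_finsum {ι : Type*} {A B : Type*} [AddCommGroup A] [Module ℂ A]
    [AddCommGroup B] [Module ℂ B] (g : A →ₗ[ℂ] B) {f : ι → A}
    (hf : (Function.support f).Finite) : g (∑ᶠ i, f i) = ∑ᶠ i, g (f i) :=
  g.toAddMonoidHom.map_finsum hf

lemma WeakMod.act_zero {d : VOA V} (W : WeakMod d M) (n : ℤ) : W.act 0 n = 0 := by
  have h := W.act_smul 0 0 n
  simpa using h

lemma VOA.mode_zero (d : VOA V) (n : ℤ) : d.mode 0 n = 0 := by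
  have h := d.mode_smul 0 0 n
  simpa using h

/-- `ot` as a linear map in the vector-algebra argument. -/
noncomputable def otVL {d : VOA V} (W : WeakMod d M) (t : ℤ) (w : M) : V →ₗ[ℂ] M where
  toFun x := ∑ᶠ r, W.act (d.proj r x) (r - 1 - t) w
  map_add' x y := by
    have hsupp : ∀ z : V, (Function.support fun r => W.act (d.proj r z) (r - 1 - t) w).Finite := by
      intro z
      apply Set.Finite.subset (d.proj_support_finite z)
      intro r hr
      simp only [Function.mem_support] at hr ⊢
      intro h0
      exact hr (by rw [h0, W.act_zero]; rfl)
    rw [← finsum_add_distrib (hsupp x) (hsupp y)]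
    refine finsum_congr fun r => ?_
    rw [map_add, W.act_add]
    rfl
  map_smul' c x := by
    have hfin : (Function.support fun r => W.act (d.proj r x) (r - 1 - t) w).Finite := by
      apply Set.Finite.subset (d.proj_support_finite x)
      intro r hr
      simp only [Function.mem_support] at hr ⊢
      intro h0
      exact hr (by rw [h0, W.act_zero]; rfl)
    simp only [RingHom.id_apply]
    rw [smul_finsum' c hfin]
    refine finsum_congr fun r => ?_
    rw [map_smul, W.act_smul]
    rfl

lemma ot_eq_otVL {d : VOA V} (W : WeakMod d M) (t : ℤ) (v : V) (w : M) :
    W.ot t v w = otVL W t w v := rfl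

lemma otVL_homog {d : VOA V} (W : WeakMod d M) (t : ℤ) (w : M) {s : ℤ} {x : V}
    (hx : x ∈ d.grading s) : otVL W t w x = W.act x (s - 1 - t) w := by
  show (∑ᶠ r, W.act (d.proj r x) (r - 1 - t) w) = W.act x (s - 1 - t) w
  rw [finsum_eq_single _ s]
  · rw [d.proj_apply_of_mem hx s, if_pos rfl]
  · intro r hr
    rw [d.proj_apply_of_mem hx r, if_neg hr, W.act_zero]
    rfl

lemma hres_support_finite (d : VOA V) (N k : ℤ) (u v : V) :
    (Function.support fun i : ℕ => cbinom N i • d.mode u ((i : ℤ) - k) v).Finite := by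
  obtain ⟨N₀, hN₀⟩ := d.truncation u v
  apply Set.Finite.subset (Set.finite_Iio (N₀ + k).toNat)
  intro i hi
  simp only [Function.mem_support] at hi
  simp only [Set.mem_Iio]
  by_contra hc
  push_neg at hc
  apply hi
  have h1 : ((N₀ + k).toNat : ℤ) ≤ (i : ℤ) := by exact_mod_cast hc
  have h2 := Int.self_le_toNat (N₀ + k)
  rw [hN₀ ((i : ℤ) - k) (by omega), smul_zero]

/-- `hres` as a linear map in the second vector argument. -/
noncomputable def hresL (d : VOA V) (N k : ℤ) (u : V) : V →ₗ[ℂ] V where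
  toFun v := d.hres N k u v
  map_add' v₁ v₂ := by
    show (∑ᶠ i : ℕ, cbinom N i • d.mode u ((i : ℤ) - k) (v₁ + v₂))
      = (∑ᶠ i : ℕ, cbinom N i • d.mode u ((i : ℤ) - k) v₁)
        + (∑ᶠ i : ℕ, cbinom N i • d.mode u ((i : ℤ) - k) v₂)
    rw [← finsum_add_distrib (hres_support_finite d N k u v₁) (hres_support_finite d N k u v₂)]
    refine finsum_congr fun i => ?_
    rw [map_add, smul_add]
  map_smul' c v := by
    show (∑ᶠ i : ℕ, cbinom N i • d.mode u ((i : ℤ) - k) (c • v))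
      = c • (∑ᶠ i : ℕ, cbinom N i • d.mode u ((i : ℤ) - k) v)
    rw [smul_finsum' c (hres_support_finite d N k u v)]
    refine finsum_congr fun i => ?_
    rw [map_smul, smul_comm]

lemma hres_eq_hresL (d : VOA V) (N k : ℤ) (u v : V) : d.hres N k u v = hresL d N k u v := rfl

lemma hres_zero_right (d : VOA V) (N k : ℤ) (u : V) : d.hres N k u 0 = 0 := by
  rw [hres_eq_hresL, map_zero]

lemma hres_zero_left (d : VOA V) (N k : ℤ) (v : V) : d.hres N k 0 v = 0 := by
  show (∑ᶠ i : ℕ, cbinom N i • d.mode 0 ((i : ℤ) - k) v) = 0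
  rw [finsum_congr fun i => ?_, finsum_zero]
  rw [d.mode_zero]
  simp

lemma hres_decomp (d : VOA V) (N k : ℤ) (u v : V) :
    d.hres N k u v = ∑ᶠ s, d.hres N k u (d.proj s v) := by
  conv_lhs => rw [← d.finsum_proj v, hres_eq_hresL,
    lmap_finsum (hresL d N k u) (d.proj_support_finite v)]
  rfl

lemma act_vanish {d : VOA V} (A : AdmMod d M) {α : ℤ} {u' : V} (hu : u' ∈ d.grading α)
    {mq : ℤ} {w : M} (hw : w ∈ A.gr mq) {s : ℤ} (hst : α + mq - s - 1 < 0) :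
    A.act u' s w = 0 := by
  have h := A.gr_act α u' hu s mq w hw
  rw [A.gr_neg _ hst] at h
  simpa using h

lemma bor1 {d : VOA V} (A : AdmMod d M) {α : ℤ} {u' : V} (hu : u' ∈ d.grading α)
    {mq : ℤ} {w : M} (hw : w ∈ A.gr mq) (q r : ℤ) (v' : V) :
    (∑ᶠ i : ℕ, cbinom (α + mq) i • A.act (d.mode u' (r + i) v') (α + mq + q - i) w)
      = ∑ᶠ i : ℕ, ((-1:ℂ)^i * cbinom r i) • A.act u' (α + mq + r - i) (A.act v' (q + i) w) := by
  rw [A.borcherds (α + mq) q r u' v' w]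
  refine finsum_congr fun i => ?_
  have hz : A.act u' ((α + mq) + i) w = 0 :=
    act_vanish A hu hw (by have := Int.natCast_nonneg i; omega)
  rw [hz, map_zero, smul_zero, sub_zero]

lemma core {d : VOA V} (A : AdmMod d M) {α β : ℤ} {u' v' : V} (hu : u' ∈ d.grading α)
    (hv : v' ∈ d.grading β) (m p n : ℕ) {w : M} (hw : w ∈ A.gr (m : ℤ)) (i' : ℕ) :
    otVL A.toWeakMod ((n:ℤ) - (m:ℤ)) w
        (d.hres (α + (m:ℤ)) ((m:ℤ) + (n:ℤ) - (p:ℤ) + (i':ℤ) + 1) u' v')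
      = ∑ i ∈ Finset.range (p+1),
          ((-1:ℂ)^i * cbinom (-((m:ℤ) + (n:ℤ) - (p:ℤ) + (i':ℤ) + 1)) i) •
            A.act u' (α - 1 - ((n:ℤ) - (p:ℤ)) - ((i' + i : ℕ) : ℤ))
              (A.act v' (β - 1 - ((p:ℤ) - (m:ℤ)) + ((i' + i : ℕ) : ℤ)) w) := by
  set k : ℤ := (m:ℤ) + (n:ℤ) - (p:ℤ) + (i':ℤ) + 1 with hk
  set q : ℤ := β + (m:ℤ) - (p:ℤ) + (i':ℤ) - 1 with hq
  have step1 : otVL A.toWeakMod ((n:ℤ) - (m:ℤ)) w (d.hres (α + (m:ℤ)) k u' v')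
      = ∑ᶠ i : ℕ, cbinom (α + (m:ℤ)) i •
          A.act (d.mode u' (-k + (i:ℤ)) v') (α + (m:ℤ) + q - (i:ℤ)) w := by
    rw [show d.hres (α + (m:ℤ)) k u' v'
        = ∑ᶠ i : ℕ, cbinom (α + (m:ℤ)) i • d.mode u' ((i:ℤ) - k) v' from rfl]
    rw [lmap_finsum _ (hres_support_finite d (α + (m:ℤ)) k u' v')]
    refine finsum_congr fun i => ?_
    rw [map_smul]
    congr 1
    rw [otVL_homog A.toWeakMod _ w (d.grading_mode α β ((i:ℤ) - k) u' v' hu hv)]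
    have e1 : (i:ℤ) - k = -k + (i:ℤ) := by ring
    have e2 : α + β - ((i:ℤ) - k) - 1 - 1 - ((n:ℤ) - (m:ℤ)) = α + (m:ℤ) + q - (i:ℤ) := by
      rw [hk, hq]; ring
    rw [e1] at e2 ⊢
    rw [e2]
  rw [step1, bor1 A hu hw q (-k) v']
  rw [finsum_eq_sum_of_support_subset _
    (s := Finset.range (p+1)) ?hsupp]
  case hsupp =>
    intro i hi
    simp only [Function.mem_support] at hi
    simp only [Finset.coe_range, Set.mem_Iio]
    by_contra hc
    push_neg at hc
    apply hi
    have hz : A.act v' (q + (i:ℤ)) w = 0 :=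
      act_vanish A hv hw
        (by rw [hq]; have h1 : (p:ℤ) + 1 ≤ (i:ℤ) := (by exact_mod_cast hc); omega)
    rw [hz, map_zero, smul_zero]
  refine Finset.sum_congr rfl fun i hi => ?_
  have e3 : α + (m:ℤ) + -k - (i:ℤ) = α - 1 - ((n:ℤ) - (p:ℤ)) - ((i' + i : ℕ) : ℤ) := by
    rw [hk]; push_cast; ring
  have e4 : q + (i:ℤ) = β - 1 - ((p:ℤ) - (m:ℤ)) + ((i' + i : ℕ) : ℤ) := by
    rw [hq]; push_cast; ring
  rw [e3, e4, hk]

end Helpers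


/-- on `M(m)`, `o_{n-p}(u) o_{p-m}(v) = o_{n-m}(u *_{m,p}^n v)`. -/
theorem stmt14 {M : Type} [AddCommGroup M] [Module ℂ M] (d : VOA V) (A : AdmMod d M)
    (m p n : ℕ) (u v : V) (w : M) (hw : w ∈ A.gr (m : ℤ)) :
    A.toWeakMod.ot ((n : ℤ) - (p : ℤ)) u (A.toWeakMod.ot ((p : ℤ) - (m : ℤ)) v w)
      = A.toWeakMod.ot ((n : ℤ) - (m : ℤ)) (d.starmpn m p n u v) w :=  by
  classical
  have hSu := d.proj_support_finite u
  have hSv := d.proj_support_finite v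
  have hfv : ∀ t : ℤ,
      (Function.support fun β => A.act (d.proj β v) (β - 1 - t) w).Finite := by
    intro t
    apply Set.Finite.subset hSv
    intro β hβ
    simp only [Function.mem_support] at hβ ⊢
    intro h0
    exact hβ (by rw [h0, A.toWeakMod.act_zero]; rfl)
  have hL : A.toWeakMod.ot ((n:ℤ) - (p:ℤ)) u (A.toWeakMod.ot ((p:ℤ) - (m:ℤ)) v w)
      = ∑ α ∈ hSu.toFinset, ∑ β ∈ hSv.toFinset,
          A.act (d.proj α u) (α - 1 - ((n:ℤ) - (p:ℤ)))
            (A.act (d.proj β v) (β - 1 - ((p:ℤ) - (m:ℤ))) w) := by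
    show (∑ᶠ α, A.act (d.proj α u) (α - 1 - ((n:ℤ) - (p:ℤ)))
        (∑ᶠ β, A.act (d.proj β v) (β - 1 - ((p:ℤ) - (m:ℤ))) w)) = _
    rw [finsum_eq_sum_of_support_subset _ (s := hSu.toFinset) ?hsubU]
    case hsubU =>
      intro α hα
      simp only [Function.mem_support] at hα
      simp only [Set.Finite.coe_toFinset, Function.mem_support]
      intro h0
      exact hα (by rw [h0, A.toWeakMod.act_zero]; rfl)
    refine Finset.sum_congr rfl fun α _ => ?_
    rw [lmap_finsum (A.act (d.proj α u) (α - 1 - ((n:ℤ) - (p:ℤ))))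
        (hfv ((p:ℤ) - (m:ℤ)))]
    rw [finsum_eq_sum_of_support_subset _ (s := hSv.toFinset) ?hsubV]
    case hsubV =>
      intro β hβ
      simp only [Function.mem_support] at hβ
      simp only [Set.Finite.coe_toFinset, Function.mem_support]
      intro h0
      exact hβ (by rw [h0, A.toWeakMod.act_zero]; simp)
  have hstep : ∀ i' : ℕ,
      (otVL A.toWeakMod ((n:ℤ) - (m:ℤ)) w)
          (d.bres m ((m:ℤ) + (n:ℤ) - (p:ℤ) + (i':ℤ) + 1) u v)
      = ∑ α ∈ hSu.toFinset, ∑ β ∈ hSv.toFinset, ∑ i ∈ Finset.range (p+1),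
          ((-1:ℂ)^i * cbinom (-((m:ℤ) + (n:ℤ) - (p:ℤ) + (i':ℤ) + 1)) i) •
            A.act (d.proj α u) (α - 1 - ((n:ℤ) - (p:ℤ)) - ((i' + i : ℕ) : ℤ))
              (A.act (d.proj β v) (β - 1 - ((p:ℤ) - (m:ℤ)) + ((i' + i : ℕ) : ℤ)) w) := by
    intro i'
    rw [show d.bres m ((m:ℤ) + (n:ℤ) - (p:ℤ) + (i':ℤ) + 1) u v
        = ∑ᶠ α, d.hres (α + (m:ℤ)) ((m:ℤ) + (n:ℤ) - (p:ℤ) + (i':ℤ) + 1) (d.proj α u) v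
        from rfl]
    rw [lmap_finsum _ ?hfin1]
    case hfin1 =>
      apply Set.Finite.subset hSu
      intro α hα
      simp only [Function.mem_support] at hα ⊢
      intro h0
      exact hα (by rw [h0, hres_zero_left])
    rw [finsum_eq_sum_of_support_subset _ (s := hSu.toFinset) ?hsub1]
    case hsub1 =>
      intro α hα
      simp only [Function.mem_support] at hα
      simp only [Set.Finite.coe_toFinset, Function.mem_support]
      intro h0
      exact hα (by rw [h0, hres_zero_left, map_zero])
    refine Finset.sum_congr rfl fun α _ => ?_
    rw [hres_decomp d (α + (m:ℤ)) ((m:ℤ) + (n:ℤ) - (p:ℤ) + (i':ℤ) + 1) (d.proj α u) v]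
    rw [lmap_finsum _ ?hfin2]
    case hfin2 =>
      apply Set.Finite.subset hSv
      intro β hβ
      simp only [Function.mem_support] at hβ ⊢
      intro h0
      exact hβ (by rw [h0, hres_zero_right])
    rw [finsum_eq_sum_of_support_subset _ (s := hSv.toFinset) ?hsub2]
    case hsub2 =>
      intro β hβ
      simp only [Function.mem_support] at hβ
      simp only [Set.Finite.coe_toFinset, Function.mem_support]
      intro h0
      exact hβ (by rw [h0, hres_zero_right, map_zero])
    refine Finset.sum_congr rfl fun β _ => ?_
    exact core A (d.proj_mem α u) (d.proj_mem β v) m p n hw i'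
  have hR : A.toWeakMod.ot ((n:ℤ) - (m:ℤ)) (d.starmpn m p n u v) w
      = ∑ α ∈ hSu.toFinset, ∑ β ∈ hSv.toFinset, ∑ i' ∈ Finset.range (p+1),
          ((-1:ℂ)^i' * cbinom ((m:ℤ) + (n:ℤ) - (p:ℤ) + (i':ℤ)) i') •
            ∑ i ∈ Finset.range (p+1),
              ((-1:ℂ)^i * cbinom (-((m:ℤ) + (n:ℤ) - (p:ℤ) + (i':ℤ) + 1)) i) •
                A.act (d.proj α u) (α - 1 - ((n:ℤ) - (p:ℤ)) - ((i' + i : ℕ) : ℤ))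
                  (A.act (d.proj β v) (β - 1 - ((p:ℤ) - (m:ℤ)) + ((i' + i : ℕ) : ℤ)) w) := by
    rw [ot_eq_otVL]
    rw [show d.starmpn m p n u v = ∑ i' ∈ Finset.range (p+1),
        ((-1:ℂ)^i' * cbinom ((m:ℤ) + (n:ℤ) - (p:ℤ) + (i':ℤ)) i') •
          d.bres m ((m:ℤ) + (n:ℤ) - (p:ℤ) + (i':ℤ) + 1) u v from rfl]
    rw [map_sum]
    rw [Finset.sum_congr rfl fun i' _ => by
      rw [map_smul, hstep i', Finset.smul_sum,
        Finset.sum_congr rfl fun α _ => by rw [Finset.smul_sum]]]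
    rw [Finset.sum_comm]
    refine Finset.sum_congr rfl fun α _ => Finset.sum_comm
  rw [hL, hR]
  refine Finset.sum_congr rfl fun α _ => Finset.sum_congr rfl fun β _ => ?_
  have hT : ∀ j : ℕ, p < j →
      A.act (d.proj α u) (α - 1 - ((n:ℤ) - (p:ℤ)) - (j:ℤ))
        (A.act (d.proj β v) (β - 1 - ((p:ℤ) - (m:ℤ)) + (j:ℤ)) w) = 0 := by
    intro j hj
    have hz : A.act (d.proj β v) (β - 1 - ((p:ℤ) - (m:ℤ)) + (j:ℤ)) w = 0 :=
      act_vanish A (d.proj_mem β v) hw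
        (by have h1 : (p:ℤ) < (j:ℤ) := (by exact_mod_cast hj); omega)
    rw [hz, map_zero]
  have hcomb : (∑ i' ∈ Finset.range (p+1),
      ((-1:ℂ)^i' * cbinom ((m:ℤ) + (n:ℤ) - (p:ℤ) + (i':ℤ)) i') •
        ∑ i ∈ Finset.range (p+1),
          ((-1:ℂ)^i * cbinom (-((m:ℤ) + (n:ℤ) - (p:ℤ) + (i':ℤ) + 1)) i) •
            A.act (d.proj α u) (α - 1 - ((n:ℤ) - (p:ℤ)) - ((i' + i : ℕ) : ℤ))
              (A.act (d.proj β v) (β - 1 - ((p:ℤ) - (m:ℤ)) + ((i' + i : ℕ) : ℤ)) w))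
      = A.act (d.proj α u) (α - 1 - ((n:ℤ) - (p:ℤ)) - ((0:ℕ):ℤ))
          (A.act (d.proj β v) (β - 1 - ((p:ℤ) - (m:ℤ)) + ((0:ℕ):ℤ)) w) :=
    comb_sum ((m:ℤ) + (n:ℤ) - (p:ℤ)) p
      (fun j => A.act (d.proj α u) (α - 1 - ((n:ℤ) - (p:ℤ)) - (j:ℤ))
        (A.act (d.proj β v) (β - 1 - ((p:ℤ) - (m:ℤ)) + (j:ℤ)) w)) hT
  rw [hcomb]
  norm_num
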